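/- arXiv:2002.11223 — 7 statements merged into one kernel-verified Lean document; each statement's English description precedes it below -/
import Mathlib

section
/- Fix an integer N ≥ 1, weights α_1,…,α_N > 0 with Σ_{k=1}^N α_k = 1, and θ ∈ (0,1). Then for every x ∈ ℝ^N, the maximum of Σ_{k=1}^N π_k x_k over π ∈ P_θ equals the infimum over η ∈ ℝ of η + (1/θ) Σ_{k=1}^N α_k max(x_k − η, 0), and this infimum is attained. -/
open Finset

theorem superquantile_duality_attained
    (N : ℕ) (hN : 1 ≤ N) (α : Fin N → ℝ) (hα : ∀ k, 0 < α k)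
    (hαsum : ∑ k, α k = 1) (θ : ℝ) (hθ0 : 0 < θ) (hθ1 : θ < 1)
    (x : Fin N → ℝ) :
    ∃ η : ℝ,
      (∀ η' : ℝ,
        η + (1 / θ) * ∑ k, α k * max (x k - η) 0
          ≤ η' + (1 / θ) * ∑ k, α k * max (x k - η') 0) ∧
      IsGreatest
        {s : ℝ | ∃ π : Fin N → ℝ, (∀ k, 0 ≤ π k) ∧ (∑ k, π k = 1) ∧
          (∀ k, π k ≤ α k / θ) ∧ s = ∑ k, π k * x k}
        (η + (1 / θ) * ∑ k, α k * max (x k - η) 0) := by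
  have hNpos : 0 < N := hN
  -- Weak duality
  have weak : ∀ (π : Fin N → ℝ), (∀ k, 0 ≤ π k) → (∑ k, π k = 1) →
      (∀ k, π k ≤ α k / θ) → ∀ η' : ℝ,
      ∑ k, π k * x k ≤ η' + (1 / θ) * ∑ k, α k * max (x k - η') 0 := by
    intro π hpos hsum hub η'
    have h1 : ∑ k, π k * (x k - η') = (∑ k, π k * x k) - η' := by
      have : ∑ k, π k * (x k - η') = (∑ k, π k * x k) - (∑ k, π k) * η' := by
        rw [Finset.sum_mul, ← Finset.sum_sub_distrib]
        exact Finset.sum_congr rfl (fun k _ => by ring)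
      rw [this, hsum, one_mul]
    have h3 : ∑ k, π k * (x k - η') ≤ (1 / θ) * ∑ k, α k * max (x k - η') 0 := by
      rw [Finset.mul_sum]
      apply Finset.sum_le_sum
      intro k _
      have h2 : π k * (x k - η') ≤ (α k / θ) * max (x k - η') 0 := by
        calc π k * (x k - η') ≤ π k * max (x k - η') 0 :=
              mul_le_mul_of_nonneg_left (le_max_left _ _) (hpos k)
          _ ≤ (α k / θ) * max (x k - η') 0 :=
              mul_le_mul_of_nonneg_right (hub k) (le_max_right _ _)
      have heq : (1 / θ) * (α k * max (x k - η') 0) = (α k / θ) * max (x k - η') 0 := by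
        ring
      linarith
    linarith
  -- The quantile η
  set S : Finset ℝ := Finset.image x Finset.univ with hSdef
  have hSne : S.Nonempty := ⟨x ⟨0, hNpos⟩, Finset.mem_image_of_mem x (Finset.mem_univ _)⟩
  set T : Finset ℝ := S.filter (fun t => (∑ k, if t < x k then α k else 0) ≤ θ) with hTdef
  have hTne : T.Nonempty := by
    refine ⟨S.max' hSne, Finset.mem_filter.mpr ⟨S.max'_mem hSne, ?_⟩⟩
    have hz : (∑ k, if S.max' hSne < x k then α k else 0) = 0 := by
      apply Finset.sum_eq_zero
      intro k _
      rw [if_neg]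
      exact not_lt.mpr (S.le_max' _ (Finset.mem_image_of_mem x (Finset.mem_univ k)))
    rw [hz]
    exact le_of_lt hθ0
  set η : ℝ := T.min' hTne with hηdef
  have hηT : η ∈ T := T.min'_mem hTne
  have hηS : η ∈ S := (Finset.mem_filter.mp hηT).1
  have hAle : (∑ k, if η < x k then α k else 0) ≤ θ := (Finset.mem_filter.mp hηT).2
  have hA' : θ ≤ ∑ k, if η ≤ x k then α k else 0 := by
    by_cases hcase : (S.filter (fun t => t < η)).Nonempty
    · set t' : ℝ := (S.filter (fun t => t < η)).max' hcase with ht'def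
      have ht'mem := (S.filter (fun t => t < η)).max'_mem hcase
      have ht'S : t' ∈ S := (Finset.mem_filter.mp ht'mem).1
      have ht'lt : t' < η := (Finset.mem_filter.mp ht'mem).2
      have ht'notT : t' ∉ T := fun h => absurd (T.min'_le t' h) (not_le.mpr ht'lt)
      have hAt' : θ < ∑ k, if t' < x k then α k else 0 := by
        by_contra h
        exact ht'notT (Finset.mem_filter.mpr ⟨ht'S, not_lt.mp h⟩)
      have hle : (∑ k, if t' < x k then α k else 0) ≤ ∑ k, if η ≤ x k then α k else 0 := by
        apply Finset.sum_le_sum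
        intro k _
        by_cases hk : t' < x k
        · rw [if_pos hk, if_pos]
          by_contra hxη
          push_neg at hxη
          have hxS : x k ∈ S := Finset.mem_image_of_mem x (Finset.mem_univ k)
          have := (S.filter (fun t => t < η)).le_max' (x k)
            (Finset.mem_filter.mpr ⟨hxS, hxη⟩)
          exact absurd this (not_le.mpr hk)
        · rw [if_neg hk]
          split
          · exact le_of_lt (hα k)
          · exact le_refl 0
      linarith
    · have hall : ∀ k, η ≤ x k := by
        intro k
        by_contra h
        push_neg at h
        exact hcase ⟨x k, Finset.mem_filter.mpr
          ⟨Finset.mem_image_of_mem x (Finset.mem_univ k), h⟩⟩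
      have hone : (∑ k, if η ≤ x k then α k else 0) = 1 := by
        rw [← hαsum]
        exact Finset.sum_congr rfl (fun k _ => if_pos (hall k))
      linarith
  obtain ⟨k0, _, hk0⟩ := Finset.mem_image.mp hηS
  set Av : ℝ := ∑ k, if η < x k then α k else 0 with hAvdef
  set Bv : ℝ := ∑ k, if x k = η then α k else 0 with hBvdef
  set Cv : ℝ := ∑ k, if η < x k then α k * x k else 0 with hCvdef
  have hsplit : (∑ k, if η ≤ x k then α k else 0) = Av + Bv := by
    rw [hAvdef, hBvdef, ← Finset.sum_add_distrib]
    apply Finset.sum_congr rfl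
    intro k _
    rcases lt_trichotomy η (x k) with h | h | h
    · rw [if_pos (le_of_lt h), if_pos h, if_neg (ne_of_gt h), add_zero]
    · rw [if_pos (le_of_eq h), if_neg (not_lt.mpr h.ge), if_pos h.symm, zero_add]
    · rw [if_neg (not_le.mpr h), if_neg (by linarith), if_neg (ne_of_lt h), add_zero]
  have hBpos : 0 < Bv := by
    apply Finset.sum_pos'
    · intro k _
      split
      · exact le_of_lt (hα k)
      · exact le_refl 0
    · exact ⟨k0, Finset.mem_univ k0, by rw [if_pos hk0]; exact hα k0⟩
  set c : ℝ := (θ - Av) / Bv with hcdef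
  have hc0 : 0 ≤ c := div_nonneg (by linarith) hBpos.le
  have hc1 : c ≤ 1 := by
    rw [hcdef, div_le_one hBpos]
    linarith
  have hcB : c * Bv = θ - Av := div_mul_cancel₀ _ (ne_of_gt hBpos)
  set π : Fin N → ℝ := fun k =>
    if η < x k then α k / θ else if x k = η then c * α k / θ else 0 with hπdef
  have hπ0 : ∀ k, 0 ≤ π k := by
    intro k
    simp only [hπdef]
    split
    · exact div_nonneg (hα k).le hθ0.le
    · split
      · exact div_nonneg (mul_nonneg hc0 (hα k).le) hθ0.le
      · exact le_refl 0
  have hπub : ∀ k, π k ≤ α k / θ := by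
    intro k
    simp only [hπdef]
    split
    · exact le_refl _
    · split
      · exact (div_le_div_iff_of_pos_right hθ0).mpr (by nlinarith [hα k])
      · exact div_nonneg (hα k).le hθ0.le
  have hπeq : ∀ k, π k =
      (if η < x k then α k else 0) / θ + c * (if x k = η then α k else 0) / θ := by
    intro k
    rcases lt_trichotomy η (x k) with h | h | h
    · simp only [hπdef, if_pos h, if_neg (ne_of_gt h)]; ring
    · simp only [hπdef, if_neg (not_lt.mpr h.ge), if_pos h.symm]; ring
    · simp only [hπdef, if_neg (not_lt.mpr h.le), if_neg (ne_of_lt h)]; ring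
  have hπxeq : ∀ k, π k * x k =
      (if η < x k then α k * x k else 0) / θ + c * η * (if x k = η then α k else 0) / θ := by
    intro k
    rcases lt_trichotomy η (x k) with h | h | h
    · simp only [hπdef, if_pos h, if_neg (ne_of_gt h)]; ring
    · simp only [hπdef, if_neg (not_lt.mpr h.ge), if_pos h.symm]
      rw [← h]; ring
    · simp only [hπdef, if_neg (not_lt.mpr h.le), if_neg (ne_of_lt h)]; ring
  have hπsum : ∑ k, π k = 1 := by
    have h1 : ∑ k, π k = Av / θ + c * Bv / θ := by
      calc ∑ k, π k
          = ∑ k, ((if η < x k then α k else 0) / θ + c * (if x k = η then α k else 0) / θ) :=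
            Finset.sum_congr rfl (fun k _ => hπeq k)
        _ = Av / θ + c * Bv / θ := by
            rw [Finset.sum_add_distrib, ← Finset.sum_div, ← Finset.sum_div, ← Finset.mul_sum]
    rw [h1, hcB]
    field_simp
    ring
  have hπval : ∑ k, π k * x k = Cv / θ + c * η * Bv / θ := by
    calc ∑ k, π k * x k
        = ∑ k, ((if η < x k then α k * x k else 0) / θ
            + c * η * (if x k = η then α k else 0) / θ) :=
          Finset.sum_congr rfl (fun k _ => hπxeq k)
      _ = Cv / θ + c * η * Bv / θ := by
          rw [Finset.sum_add_distrib, ← Finset.sum_div, ← Finset.sum_div, ← Finset.mul_sum]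
  have hmaxsum : ∑ k, α k * max (x k - η) 0 = Cv - η * Av := by
    have : ∀ k, α k * max (x k - η) 0 =
        (if η < x k then α k * x k else 0) - η * (if η < x k then α k else 0) := by
      intro k
      by_cases h : η < x k
      · rw [if_pos h, if_pos h, max_eq_left (by linarith)]; ring
      · rw [if_neg h, if_neg h, max_eq_right (by push_neg at h; linarith)]; ring
    rw [Finset.sum_congr rfl (fun k _ => this k), Finset.sum_sub_distrib, ← Finset.mul_sum]
  have hfval : η + (1 / θ) * ∑ k, α k * max (x k - η) 0 = ∑ k, π k * x k := by
    rw [hmaxsum, hπval]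
    have hcηB : c * η * Bv = η * (θ - Av) := by
      rw [mul_comm c η, mul_assoc, hcB]
    rw [hcηB]
    field_simp
    ring
  refine ⟨η, ?_, ?_, ?_⟩
  · intro η'
    rw [hfval]
    exact weak π hπ0 hπsum hπub η'
  · exact ⟨π, hπ0, hπsum, hπub, hfval⟩
  · rintro s ⟨π', h1, h2, h3, rfl⟩
    exact weak π' h1 h2 h3 η
end

section
/- Fix an integer N ≥ 1, weights α_1,…,α_N > 0 with Σ_{k=1}^N α_k = 1, and θ ∈ (0,1). Let x ∈ ℝ^N and let σ be a permutation of {1,…,N} such that x_{σ(1)} ≤ x_{σ(2)} ≤ … ≤ x_{σ(N)}. Define j* = min{ j ∈ {1,…,N} : Σ_{k=1}^{j} α_{σ(k)} ≥ 1 − θ }. Then η* = x_{σ(j*)} is a minimizer over η ∈ ℝ of the function h(η) = η + (1/θ) Σ_{k=1}^N α_k max(x_k − η, 0). -/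
open Finset

theorem weighted_quantile_minimizes_superquantile_dual
    (N : ℕ) (hN : 1 ≤ N) (α : Fin N → ℝ) (hα : ∀ k, 0 < α k)
    (hαsum : ∑ k, α k = 1) (θ : ℝ) (hθ0 : 0 < θ) (hθ1 : θ < 1)
    (x : Fin N → ℝ) (σ : Equiv.Perm (Fin N))
    (hsorted : Monotone fun j => x (σ j))
    (jstar : Fin N)
    (hjstar : IsLeast {j : Fin N | 1 - θ ≤ ∑ k ∈ Finset.Iic j, α (σ k)} jstar) :
    ∀ η : ℝ,
      x (σ jstar) + (1 / θ) * ∑ k, α k * max (x k - x (σ jstar)) 0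
        ≤ η + (1 / θ) * ∑ k, α k * max (x k - η) 0 := by
  intro η
  set e := x (σ jstar) with he
  -- A ≤ θ where A is the weight of points strictly above e
  have hA : ∑ k ∈ univ.filter (fun k => e < x k), α k ≤ θ := by
    have hsub : (Finset.Iic jstar).image σ ⊆ univ.filter (fun k => x k ≤ e) := by
      intro k hk
      simp only [mem_image, mem_Iic] at hk
      obtain ⟨j, hj, rfl⟩ := hk
      simp only [mem_filter, mem_univ, true_and]
      exact hsorted hj
    have h1 : (1 : ℝ) - θ ≤ ∑ k ∈ univ.filter (fun k => x k ≤ e), α k := by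
      calc (1:ℝ) - θ ≤ ∑ k ∈ Finset.Iic jstar, α (σ k) := hjstar.1
        _ = ∑ k ∈ (Finset.Iic jstar).image σ, α k := by
            rw [Finset.sum_image (fun a _ b _ h => σ.injective h)]
        _ ≤ _ := Finset.sum_le_sum_of_subset_of_nonneg hsub
              (fun k _ _ => (hα k).le)
    have hsplit : ∑ k ∈ univ.filter (fun k => e < x k), α k
        + ∑ k ∈ univ.filter (fun k => x k ≤ e), α k = 1 := by
      rw [← hαsum]
      rw [← Finset.sum_filter_add_sum_filter_not univ (fun k => e < x k) α]
      congr 1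
      apply Finset.sum_congr _ (fun _ _ => rfl)
      ext k; simp [not_lt]
    linarith
  -- θ ≤ B where B is the weight of points ≥ e
  have hB : θ ≤ ∑ k ∈ univ.filter (fun k => e ≤ x k), α k := by
    have hsub : univ.filter (fun k => x k < e) ⊆ (Finset.Iio jstar).image σ := by
      intro k hk
      simp only [mem_filter, mem_univ, true_and] at hk
      simp only [mem_image, mem_Iio]
      refine ⟨σ.symm k, ?_, by simp⟩
      by_contra h
      push_neg at h
      have : e ≤ x k := by simpa using hsorted h
      linarith
    have hlt : ∑ k ∈ Finset.Iio jstar, α (σ k) < 1 - θ := by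
      rcases Finset.eq_empty_or_nonempty (Finset.Iio jstar) with h | h
      · rw [h]; simp; linarith
      · set j := (Finset.Iio jstar).max' h with hj
        have hjlt : j < jstar := Finset.mem_Iio.mp ((Finset.Iio jstar).max'_mem h)
        have heq : Finset.Iio jstar = Finset.Iic j := by
          ext a
          simp only [mem_Iio, mem_Iic]
          constructor
          · intro ha; exact Finset.le_max' _ a (Finset.mem_Iio.mpr ha)
          · intro ha; exact lt_of_le_of_lt ha hjlt
        rw [heq]
        by_contra hc
        push_neg at hc
        have : jstar ≤ j := hjstar.2 hc
        exact absurd this (not_le.2 hjlt)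
    have h2 : ∑ k ∈ univ.filter (fun k => x k < e), α k < 1 - θ := by
      calc ∑ k ∈ univ.filter (fun k => x k < e), α k
          ≤ ∑ k ∈ (Finset.Iio jstar).image σ, α k :=
            Finset.sum_le_sum_of_subset_of_nonneg hsub (fun k _ _ => (hα k).le)
        _ = ∑ k ∈ Finset.Iio jstar, α (σ k) := by
            rw [Finset.sum_image (fun a _ b _ h => σ.injective h)]
        _ < 1 - θ := hlt
    have hsplit : ∑ k ∈ univ.filter (fun k => e ≤ x k), α k
        + ∑ k ∈ univ.filter (fun k => x k < e), α k = 1 := by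
      rw [← hαsum, ← Finset.sum_filter_add_sum_filter_not univ (fun k => e ≤ x k) α]
      congr 1
      apply Finset.sum_congr _ (fun _ _ => rfl)
      ext k; simp [not_le]
    linarith
  rcases le_or_gt e η with hle | hlt
  · -- case e ≤ η
    have key : ∑ k, α k * max (x k - e) 0
        ≤ (∑ k, α k * max (x k - η) 0)
          + (η - e) * ∑ k ∈ univ.filter (fun k => e < x k), α k := by
      rw [Finset.mul_sum, Finset.sum_filter, ← Finset.sum_add_distrib]
      apply Finset.sum_le_sum
      intro k _
      by_cases h : e < x k
      · simp only [if_pos h]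
        have h1 : max (x k - e) 0 = x k - e := max_eq_left (by linarith)
        rw [h1]
        have h2 : x k - η ≤ max (x k - η) 0 := le_max_left _ _
        nlinarith [(hα k).le]
      · simp only [if_neg h]
        push_neg at h
        have h1 : max (x k - e) 0 = 0 := max_eq_right (by linarith)
        rw [h1]
        have h2 : (0:ℝ) ≤ max (x k - η) 0 := le_max_right _ _
        nlinarith [(hα k).le]
    have hθinv : (0:ℝ) < 1/θ := by positivity
    have hmul : (1/θ) * ((η - e) * ∑ k ∈ univ.filter (fun k => e < x k), α k)
        ≤ η - e := by
      have h1 : (η - e) * ∑ k ∈ univ.filter (fun k => e < x k), α k ≤ (η - e) * θ := by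
        nlinarith
      have h2 : (1/θ) * ((η - e) * ∑ k ∈ univ.filter (fun k => e < x k), α k)
          ≤ (1/θ) * ((η - e) * θ) := by nlinarith
      have h3 : (1/θ) * ((η - e) * θ) = η - e := by field_simp
      linarith
    have h3 := mul_le_mul_of_nonneg_left key hθinv.le
    rw [mul_add] at h3
    linarith
  · -- case η < e
    have key : ∑ k, α k * max (x k - e) 0
        ≤ (∑ k, α k * max (x k - η) 0)
          + (η - e) * ∑ k ∈ univ.filter (fun k => e ≤ x k), α k := by
      rw [Finset.mul_sum, Finset.sum_filter, ← Finset.sum_add_distrib]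
      apply Finset.sum_le_sum
      intro k _
      by_cases h : e ≤ x k
      · simp only [if_pos h]
        have h1 : max (x k - e) 0 = x k - e := max_eq_left (by linarith)
        rw [h1]
        have h2 : x k - η ≤ max (x k - η) 0 := le_max_left _ _
        nlinarith [(hα k).le]
      · simp only [if_neg h]
        push_neg at h
        have h1 : max (x k - e) 0 = 0 := max_eq_right (by linarith)
        rw [h1]
        have h2 : (0:ℝ) ≤ max (x k - η) 0 := le_max_right _ _
        nlinarith [(hα k).le]
    have hθinv : (0:ℝ) < 1/θ := by positivity
    have hmul : (1/θ) * ((η - e) * ∑ k ∈ univ.filter (fun k => e ≤ x k), α k)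
        ≤ η - e := by
      have h1 : (η - e) * ∑ k ∈ univ.filter (fun k => e ≤ x k), α k ≤ (η - e) * θ := by
        nlinarith
      have h2 : (1/θ) * ((η - e) * ∑ k ∈ univ.filter (fun k => e ≤ x k), α k)
          ≤ (1/θ) * ((η - e) * θ) := by nlinarith
      have h3 : (1/θ) * ((η - e) * θ) = η - e := by field_simp
      linarith
    have h3 := mul_le_mul_of_nonneg_left key hθinv.le
    rw [mul_add] at h3
    linarith
end

section
/- Fix an integer N ≥ 1, weights α_1,…,α_N > 0 with Σ_{k=1}^N α_k = 1, θ ∈ (0,1), and ν > 0. Let F_1,…,F_N : ℝ^d → ℝ be arbitrary functions. Then for all (w,η) ∈ ℝ^d × ℝ, 0 ≤ F̄_{θ,ν}(w,η) − F̄_θ(w,η) ≤ ν/(2θ). -/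
open Finset

/-- The smoothing `g_ν` of the positive-part function. -/
noncomputable def gsm (ν ρ : ℝ) : ℝ :=
  if ρ ≤ 0 then ν / 2 else if ρ ≤ ν then ρ ^ 2 / (2 * ν) + ν / 2 else ρ

lemma gsm_bounds {ν : ℝ} (hν : 0 < ν) (ρ : ℝ) :
    0 ≤ gsm ν ρ - max ρ 0 ∧ gsm ν ρ - max ρ 0 ≤ ν / 2 := by
  unfold gsm
  rcases le_or_gt ρ 0 with h | h
  · rw [if_pos h, max_eq_right h]
    constructor <;> linarith
  · rw [if_neg (not_le.mpr h), max_eq_left h.le]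
    rcases le_or_gt ρ ν with h2 | h2
    · rw [if_pos h2]
      have hkey : ρ ^ 2 / (2 * ν) + ν / 2 - ρ = (ρ - ν) ^ 2 / (2 * ν) := by
        field_simp; ring
      rw [hkey]
      constructor
      · positivity
      · rw [div_le_iff₀ (by positivity)]
        nlinarith
    · rw [if_neg (not_le.mpr h2)]
      constructor <;> linarith

theorem smoothed_objective_uniform_approx
    (N d : ℕ) (hN : 1 ≤ N) (α : Fin N → ℝ) (hα : ∀ k, 0 < α k)
    (hαsum : ∑ k, α k = 1) (θ ν : ℝ) (hθ0 : 0 < θ) (hθ1 : θ < 1) (hν : 0 < ν)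
    (F : Fin N → EuclideanSpace ℝ (Fin d) → ℝ)
    (w : EuclideanSpace ℝ (Fin d)) (η : ℝ) :
    0 ≤ (η + (1 / θ) * ∑ k, α k * gsm ν (F k w - η))
        - (η + (1 / θ) * ∑ k, α k * max (F k w - η) 0) ∧
    (η + (1 / θ) * ∑ k, α k * gsm ν (F k w - η))
        - (η + (1 / θ) * ∑ k, α k * max (F k w - η) 0) ≤ ν / (2 * θ) := by
  have key : (η + (1 / θ) * ∑ k, α k * gsm ν (F k w - η))
        - (η + (1 / θ) * ∑ k, α k * max (F k w - η) 0)
      = (1 / θ) * ∑ k, α k * (gsm ν (F k w - η) - max (F k w - η) 0) := by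
    simp only [mul_sub, Finset.mul_sum, Finset.sum_sub_distrib]
    ring
  have hθinv : 0 < 1 / θ := by positivity
  have hlo : 0 ≤ ∑ k, α k * (gsm ν (F k w - η) - max (F k w - η) 0) :=
    Finset.sum_nonneg fun k _ => mul_nonneg (hα k).le (gsm_bounds hν _).1
  have hhi : ∑ k, α k * (gsm ν (F k w - η) - max (F k w - η) 0) ≤ ν / 2 := by
    calc ∑ k, α k * (gsm ν (F k w - η) - max (F k w - η) 0)
        ≤ ∑ k, α k * (ν / 2) :=
          Finset.sum_le_sum fun k _ =>
            mul_le_mul_of_nonneg_left (gsm_bounds hν _).2 (hα k).le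
      _ = ν / 2 := by rw [← Finset.sum_mul, hαsum, one_mul]
  constructor
  · rw [key]; positivity
  · rw [key]
    rw [show ν / (2 * θ) = (1 / θ) * (ν / 2) by ring]
    exact mul_le_mul_of_nonneg_left hhi hθinv.le
end

section
/- Fix an integer N ≥ 1, weights α_1,…,α_N > 0 with Σ_{k=1}^N α_k = 1, θ ∈ (0,1), and ν > 0. Let each F_k : ℝ^d → ℝ be B-Lipschitz and L-smooth. Then for every fixed η ∈ ℝ, the map w ↦ ∇_w F̄_{θ,ν}(w,η) is Lipschitz with constant (L + B²/ν)/θ with respect to the Euclidean norm. -/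
open Finset

open Set Topology

noncomputable def gd (ν ρ : ℝ) : ℝ := max 0 (min ρ ν) / ν

lemma gd_nonneg {ν : ℝ} (hν : 0 < ν) (ρ : ℝ) : 0 ≤ gd ν ρ :=
  div_nonneg (le_max_left _ _) hν.le

lemma gd_le_one {ν : ℝ} (hν : 0 < ν) (ρ : ℝ) : gd ν ρ ≤ 1 := by
  rw [gd, div_le_one hν]
  exact max_le hν.le (min_le_right _ _)

lemma gd_lip {ν : ℝ} (hν : 0 < ν) (a b : ℝ) : |gd ν a - gd ν b| ≤ |a - b| / ν := by
  rw [gd, gd, div_sub_div_same, abs_div, abs_of_pos hν]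
  rw [div_le_div_iff_of_pos_right hν]
  have h1 : |max 0 (min a ν) - max 0 (min b ν)| ≤ |min a ν - min b ν| := by
    rw [max_comm 0 (min a ν), max_comm 0 (min b ν)]
    exact abs_max_sub_max_le_abs _ _ _
  refine h1.trans ?_
  simpa using abs_min_sub_min_le_max a ν b ν

lemma gsm_hasDerivAt {ν : ℝ} (hν : 0 < ν) (ρ : ℝ) : HasDerivAt (gsm ν) (gd ν ρ) ρ := by
  have hq : ∀ x : ℝ, HasDerivAt (fun y : ℝ => y ^ 2 / (2 * ν) + ν / 2) (x / ν) x := by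
    intro x
    have := ((hasDerivAt_pow 2 x).div_const (2 * ν)).add_const (ν / 2)
    refine this.congr_deriv ?_
    field_simp
    ring
  have hIccq : EqOn (gsm ν) (fun y : ℝ => y ^ 2 / (2 * ν) + ν / 2) (Icc 0 ν) := by
    intro x hx
    rcases hx with ⟨hx0, hxν⟩
    unfold gsm
    rcases le_or_gt x 0 with h | h
    · have hx : x = 0 := le_antisymm h hx0
      subst hx
      rw [if_pos le_rfl]
      simp
    · rw [if_neg (not_le.2 h), if_pos hxν]
  have hIcc_mem : Icc (0:ℝ) ν ∈ 𝓝[Ici (0:ℝ)] 0 := by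
    rw [← Ici_inter_Iic]
    exact inter_mem_nhdsWithin _ (Iic_mem_nhds hν)
  have hIcc_memν : Icc (0:ℝ) ν ∈ 𝓝[Iic ν] ν := by
    rw [← Ici_inter_Iic]
    exact Filter.inter_mem (mem_nhdsWithin_of_mem_nhds (Ici_mem_nhds hν)) self_mem_nhdsWithin
  have hId : EqOn (gsm ν) id (Ici ν) := by
    intro x hx
    rcases lt_or_eq_of_le (mem_Ici.1 hx) with h | h
    · unfold gsm
      rw [if_neg (by push_neg; linarith), if_neg (not_le.2 h)]
      rfl
    · rw [← h]
      unfold gsm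
      rw [if_neg (not_le.2 hν), if_pos le_rfl]
      show ν ^ 2 / (2 * ν) + ν / 2 = id ν
      field_simp
      simp only [id_eq]; ring
  rcases lt_trichotomy ρ 0 with h0 | h0 | h0
  · -- ρ < 0
    have he : gsm ν =ᶠ[𝓝 ρ] fun _ => ν / 2 := by
      filter_upwards [Iio_mem_nhds h0] with x hx
      exact if_pos (le_of_lt hx)
    have h : HasDerivAt (gsm ν) 0 ρ := (hasDerivAt_const ρ (ν/2)).congr_of_eventuallyEq he
    convert h using 1
    rw [gd, min_eq_left (by linarith), max_eq_left h0.le, zero_div]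
  · -- ρ = 0
    subst h0
    have hleft : HasDerivWithinAt (gsm ν) 0 (Iic 0) 0 :=
      (hasDerivWithinAt_const 0 _ (ν/2)).congr (fun x hx => if_pos hx) (if_pos le_rfl)
    have hright : HasDerivWithinAt (gsm ν) 0 (Ici 0) 0 := by
      have h := ((hq 0).hasDerivWithinAt (s := Icc 0 ν)).congr hIccq (hIccq ⟨le_rfl, hν.le⟩)
      simpa using h.mono_of_mem_nhdsWithin hIcc_mem
    have h := hleft.union hright
    rw [Iic_union_Ici, hasDerivWithinAt_univ] at h
    refine h.congr_deriv ?_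
    rw [gd, min_eq_left hν.le, max_self, zero_div]
  · -- ρ > 0
    rcases lt_trichotomy ρ ν with h1 | h1 | h1
    · have he : gsm ν =ᶠ[𝓝 ρ] fun y => y ^ 2 / (2 * ν) + ν / 2 := by
        filter_upwards [Ioo_mem_nhds h0 h1] with x hx
        exact hIccq ⟨hx.1.le, hx.2.le⟩
      have h : HasDerivAt (gsm ν) (ρ / ν) ρ := (hq ρ).congr_of_eventuallyEq he
      convert h using 1
      rw [gd, min_eq_left h1.le, max_eq_right h0.le]
    · rw [h1]
      have hleft : HasDerivWithinAt (gsm ν) 1 (Iic ν) ν := by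
        have h := ((hq ν).hasDerivWithinAt (s := Icc 0 ν)).congr hIccq (hIccq ⟨hν.le, le_rfl⟩)
        have h2 := h.mono_of_mem_nhdsWithin hIcc_memν
        refine h2.congr_deriv ?_
        field_simp
      have hright : HasDerivWithinAt (gsm ν) 1 (Ici ν) ν :=
        (hasDerivWithinAt_id ν _).congr hId (hId (mem_Ici.2 le_rfl))
      have h := hleft.union hright
      rw [Iic_union_Ici, hasDerivWithinAt_univ] at h
      refine h.congr_deriv ?_
      rw [gd, min_self, max_eq_right hν.le, div_self (by linarith)]
    · have he : gsm ν =ᶠ[𝓝 ρ] id := by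
        filter_upwards [Ioi_mem_nhds h1] with x hx
        exact hId (mem_Ici.2 (le_of_lt hx))
      have h : HasDerivAt (gsm ν) 1 ρ := (hasDerivAt_id ρ).congr_of_eventuallyEq he
      convert h using 1
      rw [gd, min_eq_right h1.le, max_eq_right hν.le, div_self (by linarith)]

set_option maxHeartbeats 1000000 in
theorem smoothed_objective_gradient_w_lipschitz
    (N d : ℕ) (hN : 1 ≤ N) (α : Fin N → ℝ) (hα : ∀ k, 0 < α k)
    (hαsum : ∑ k, α k = 1) (θ ν : ℝ) (hθ0 : 0 < θ) (hθ1 : θ < 1) (hν : 0 < ν)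
    (B L : ℝ)
    (F : Fin N → EuclideanSpace ℝ (Fin d) → ℝ)
    (hFlip : ∀ k (w w' : EuclideanSpace ℝ (Fin d)), |F k w - F k w'| ≤ B * ‖w - w'‖)
    (hFdiff : ∀ k, Differentiable ℝ (F k))
    (hFsmooth : ∀ k (w w' : EuclideanSpace ℝ (Fin d)),
      ‖gradient (F k) w - gradient (F k) w'‖ ≤ L * ‖w - w'‖)
    (η : ℝ) :
    ∀ w w' : EuclideanSpace ℝ (Fin d),
      ‖gradient (fun u => η + (1 / θ) * ∑ k, α k * gsm ν (F k u - η)) w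
        - gradient (fun u => η + (1 / θ) * ∑ k, α k * gsm ν (F k u - η)) w'‖
      ≤ ((L + B ^ 2 / ν) / θ) * ‖w - w'‖ := by
  intro w w'
  by_cases hd : d = 0
  · subst hd
    have hww : w = w' := by ext i; exact i.elim0
    rw [hww, sub_self, norm_zero, sub_self, norm_zero, mul_zero]
  -- now d ≥ 1, so B ≥ 0
  have hB0 : 0 ≤ B := by
    have hk0 : (0 : ℕ) < N := hN
    set k0 : Fin N := ⟨0, hk0⟩
    set w1 : EuclideanSpace ℝ (Fin d) :=
      EuclideanSpace.single (⟨0, Nat.pos_of_ne_zero hd⟩ : Fin d) (1 : ℝ)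
    have h1 : ‖(0 : EuclideanSpace ℝ (Fin d)) - w1‖ = 1 := by
      rw [zero_sub, norm_neg, EuclideanSpace.norm_single, norm_one]
    have := (abs_nonneg (F k0 0 - F k0 w1)).trans (hFlip k0 0 w1)
    rwa [h1, mul_one] at this
  set f : EuclideanSpace ℝ (Fin d) → ℝ := fun u => η + (1 / θ) * ∑ k, α k * gsm ν (F k u - η) with hf
  set D : Fin N → EuclideanSpace ℝ (Fin d) → (EuclideanSpace ℝ (Fin d) →L[ℝ] ℝ) := fun k u => fderiv ℝ (F k) u with hD
  set a : Fin N → EuclideanSpace ℝ (Fin d) → ℝ := fun k u => gd ν (F k u - η) with ha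
  -- fderiv formula
  have hgf : ∀ u : EuclideanSpace ℝ (Fin d), HasFDerivAt f ((1/θ) • ∑ k, (α k * a k u) • D k u) u := by
    intro u
    have hterm : ∀ k : Fin N, HasFDerivAt (fun v => α k * gsm ν (F k v - η))
        ((α k) • ((a k u) • D k u)) u := by
      intro k
      have h1 : HasFDerivAt (fun v => F k v - η) (D k u) u :=
        ((hFdiff k).differentiableAt.hasFDerivAt).sub_const η
      have h2 := (gsm_hasDerivAt hν (F k u - η)).comp_hasFDerivAt u h1
      exact h2.const_mul (α k)
    have hsum := HasFDerivAt.fun_sum (fun k (_ : k ∈ Finset.univ) => hterm k)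
    have hfinal := (hsum.const_mul (1/θ)).const_add η
    simp only [smul_smul] at hfinal
    exact hfinal
  -- gradient in terms of fderiv
  have hgrad : ∀ u : EuclideanSpace ℝ (Fin d), gradient f u
      = (InnerProductSpace.toDual ℝ (EuclideanSpace ℝ (Fin d))).symm ((1/θ) • ∑ k, (α k * a k u) • D k u) := by
    intro u
    rw [show gradient f u = (InnerProductSpace.toDual ℝ (EuclideanSpace ℝ (Fin d))).symm (fderiv ℝ f u) from rfl,
      (hgf u).fderiv]
  -- bounds
  have hDlip : ∀ k, ‖D k w - D k w'‖ ≤ L * ‖w - w'‖ := by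
    intro k
    have h1 : gradient (F k) w - gradient (F k) w'
        = (InnerProductSpace.toDual ℝ (EuclideanSpace ℝ (Fin d))).symm (D k w - D k w') := by
      rw [map_sub]; rfl
    have := hFsmooth k w w'
    rwa [h1, LinearIsometryEquiv.norm_map] at this
  have hDle : ∀ u : EuclideanSpace ℝ (Fin d), ∀ k, ‖D k u‖ ≤ B := by
    intro u k
    refine norm_fderiv_le_of_lip' ℝ hB0 ?_
    filter_upwards with x
    simpa [Real.norm_eq_abs] using hFlip k x u
  have hterm_bound : ∀ k : Fin N,
      ‖(a k w) • D k w - (a k w') • D k w'‖ ≤ (L + B ^ 2 / ν) * ‖w - w'‖ := by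
    intro k
    have hsplit : (a k w) • D k w - (a k w') • D k w'
        = (a k w) • (D k w - D k w') + (a k w - a k w') • D k w' := by
      rw [smul_sub]; module
    rw [hsplit]
    refine (norm_add_le _ _).trans ?_
    rw [norm_smul (a k w) (D k w - D k w'), norm_smul (a k w - a k w') (D k w'),
      Real.norm_eq_abs, Real.norm_eq_abs]
    have h1 : |a k w| * ‖D k w - D k w'‖ ≤ 1 * (L * ‖w - w'‖) := by
      apply mul_le_mul _ (hDlip k) (norm_nonneg _) zero_le_one
      rw [abs_of_nonneg (gd_nonneg hν _)]
      exact gd_le_one hν _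
    have h2 : |a k w - a k w'| * ‖D k w'‖ ≤ (B * ‖w - w'‖ / ν) * B := by
      apply mul_le_mul _ (hDle w' k) (norm_nonneg _)
      · positivity
      · refine (gd_lip hν _ _).trans ?_
        have : |F k w - η - (F k w' - η)| = |F k w - F k w'| := by ring_nf
        rw [this]
        exact (div_le_div_iff_of_pos_right hν).2 (hFlip k w w')
    calc |a k w| * ‖D k w - D k w'‖ + |a k w - a k w'| * ‖D k w'‖
        ≤ 1 * (L * ‖w - w'‖) + (B * ‖w - w'‖ / ν) * B := add_le_add h1 h2
      _ = (L + B ^ 2 / ν) * ‖w - w'‖ := by ring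
  -- assemble
  rw [hgrad w, hgrad w', ← map_sub, LinearIsometryEquiv.norm_map, ← smul_sub,
    norm_smul (1/θ) (∑ k, (α k * a k w) • D k w - ∑ k, (α k * a k w') • D k w'),
    Real.norm_eq_abs, abs_of_pos (by positivity : (0:ℝ) < 1/θ), ← Finset.sum_sub_distrib]
  have hsum_bound : ‖∑ k, ((α k * a k w) • D k w - (α k * a k w') • D k w')‖
      ≤ (L + B ^ 2 / ν) * ‖w - w'‖ := by
    refine (norm_sum_le _ _).trans ?_
    have heach : ∀ k : Fin N, ‖(α k * a k w) • D k w - (α k * a k w') • D k w'‖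
        ≤ α k * ((L + B ^ 2 / ν) * ‖w - w'‖) := by
      intro k
      have : (α k * a k w) • D k w - (α k * a k w') • D k w'
          = (α k) • ((a k w) • D k w - (a k w') • D k w') := by
        rw [smul_sub, smul_smul, smul_smul]
      have e := norm_smul (α k) (a k w • D k w - a k w' • D k w')
      rw [this, e, Real.norm_eq_abs, abs_of_pos (hα k)]
      exact mul_le_mul_of_nonneg_left (hterm_bound k) (hα k).le
    refine (Finset.sum_le_sum fun k _ => heach k).trans ?_
    rw [← Finset.sum_mul, hαsum, one_mul]
  calc (1/θ) * ‖∑ k, ((α k * a k w) • D k w - (α k * a k w') • D k w')‖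
      ≤ (1/θ) * ((L + B ^ 2 / ν) * ‖w - w'‖) :=
        mul_le_mul_of_nonneg_left hsum_bound (by positivity)
    _ = ((L + B ^ 2 / ν) / θ) * ‖w - w'‖ := by ring
end

section
/- Fix an integer N ≥ 1, weights α_1,…,α_N > 0 with Σ_{k=1}^N α_k = 1, θ ∈ (0,1), and ν > 0. For any x ∈ ℝ^N, every minimizer η̂ of the function h(η) = η + (1/θ) Σ_{k=1}^N α_k g_ν(x_k − η) over η ∈ ℝ satisfies min_{k∈[N]} x_k − ν ≤ η̂ ≤ max_{k∈[N]} x_k. -/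
open Finset

lemma gsm_of_le (ν ρ : ℝ) (h : ρ ≤ 0) : gsm ν ρ = ν / 2 := by
  simp [gsm, h]

lemma gsm_of_ge (ν ρ : ℝ) (hν : 0 < ν) (h : ν ≤ ρ) : gsm ν ρ = ρ := by
  unfold gsm
  rw [if_neg (by linarith)]
  rcases lt_or_eq_of_le h with h' | h'
  · rw [if_neg (by linarith)]
  · rw [if_pos (le_of_eq h'.symm), ← h']
    field_simp
    ring

theorem smoothed_eta_minimizer_bounds
    (N : ℕ) (hN : 0 < N) (α : Fin N → ℝ) (hα : ∀ k, 0 < α k)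
    (hαsum : ∑ k, α k = 1) (θ ν : ℝ) (hθ0 : 0 < θ) (hθ1 : θ < 1) (hν : 0 < ν)
    (x : Fin N → ℝ) (ηhat : ℝ)
    (hmin : ∀ η' : ℝ,
      ηhat + (1 / θ) * ∑ k, α k * gsm ν (x k - ηhat)
        ≤ η' + (1 / θ) * ∑ k, α k * gsm ν (x k - η')) :
    (Finset.univ.inf' (Finset.univ_nonempty_iff.mpr ⟨⟨0, hN⟩⟩) x) - ν ≤ ηhat ∧
    ηhat ≤ Finset.univ.sup' (Finset.univ_nonempty_iff.mpr ⟨⟨0, hN⟩⟩) x := by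
  have hne : (Finset.univ : Finset (Fin N)).Nonempty := Finset.univ_nonempty_iff.mpr ⟨⟨0, hN⟩⟩
  set m := Finset.univ.inf' hne x with hm
  set M := Finset.univ.sup' hne x with hM
  constructor
  · by_contra hcon
    push_neg at hcon
    have h1 := hmin (m - ν)
    have e1 : ∀ k : Fin N, gsm ν (x k - ηhat) = x k - ηhat := by
      intro k
      apply gsm_of_ge _ _ hν
      have : m ≤ x k := Finset.inf'_le _ (Finset.mem_univ k)
      linarith
    have e2 : ∀ k : Fin N, gsm ν (x k - (m - ν)) = x k - (m - ν) := by
      intro k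
      apply gsm_of_ge _ _ hν
      have : m ≤ x k := Finset.inf'_le _ (Finset.mem_univ k)
      linarith
    simp only [e1, e2] at h1
    have s1 : ∀ η : ℝ, ∑ k, α k * (x k - η) = (∑ k, α k * x k) - η := by
      intro η
      have : ∑ k, α k * (x k - η) = ∑ k, (α k * x k - α k * η) :=
        Finset.sum_congr rfl (fun k _ => by ring)
      rw [this, Finset.sum_sub_distrib, ← Finset.sum_mul, hαsum, one_mul]
    rw [s1 ηhat, s1 (m - ν)] at h1
    have hθ' : (0:ℝ) < 1/θ - 1 := by
      rw [sub_pos, lt_div_iff₀ hθ0]; linarith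
    nlinarith [mul_pos hθ' (sub_pos.mpr hcon)]
  · by_contra hcon
    push_neg at hcon
    have h1 := hmin M
    have e1 : ∀ k : Fin N, gsm ν (x k - ηhat) = ν / 2 := by
      intro k
      apply gsm_of_le
      have : x k ≤ M := Finset.le_sup' _ (Finset.mem_univ k)
      linarith
    have e2 : ∀ k : Fin N, gsm ν (x k - M) = ν / 2 := by
      intro k
      apply gsm_of_le
      have : x k ≤ M := Finset.le_sup' _ (Finset.mem_univ k)
      linarith
    simp only [e1, e2] at h1
    linarith
end

section
/- Fix an integer N ≥ 1, weights α_1,…,α_N > 0 with Σ_{k=1}^N α_k = 1, and θ ∈ (0,1). Let x ∈ ℝ^N satisfy x_1 < x_2 < … < x_N and let 0 < ν < min_{k∈[N−1]} (x_{k+1} − x_k). Define j* = min{ j : Σ_{k=1}^{j} α_k ≥ 1 − θ }. Then η* = x_{j*} − (ν/α_{j*}) ( Σ_{k=1}^{j*} α_k − (1 − θ) ) is a minimizer over η ∈ ℝ of h(η) = η + (1/θ) Σ_{k=1}^N α_k g_ν(x_k − η). -/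
open Finset

/-- Derivative (subgradient) of `gsm`. -/
noncomputable def dsm (ν ρ : ℝ) : ℝ :=
  if ρ ≤ 0 then 0 else if ρ ≤ ν then ρ / ν else 1

lemma gsm_subgrad (ν : ℝ) (hν : 0 < ν) (ρ₀ ρ : ℝ) :
    gsm ν ρ₀ + dsm ν ρ₀ * (ρ - ρ₀) ≤ gsm ν ρ := by
  have hν' : ν ≠ 0 := hν.ne'
  unfold gsm dsm
  split_ifs with h1 h2 h3 h3 h4 h5 h6 <;> (try push_neg at *)
  · linarith
  · have : 0 ≤ ρ ^ 2 / (2 * ν) := by positivity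
    linarith
  · linarith
  · -- 0 < ρ₀ ≤ ν, ρ ≤ 0
    have hid : ρ₀ ^ 2 / (2 * ν) + ν / 2 + ρ₀ / ν * (ρ - ρ₀)
        = (2 * ρ₀ * ρ - ρ₀ ^ 2) / (2 * ν) + ν / 2 := by field_simp; ring
    have hnum : 2 * ρ₀ * ρ - ρ₀ ^ 2 ≤ 0 := by nlinarith
    have := div_nonpos_of_nonpos_of_nonneg hnum (by positivity : (0:ℝ) ≤ 2 * ν)
    linarith
  · -- both middle
    have hid : ρ ^ 2 / (2 * ν) + ν / 2 - (ρ₀ ^ 2 / (2 * ν) + ν / 2 + ρ₀ / ν * (ρ - ρ₀))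
        = (ρ - ρ₀) ^ 2 / (2 * ν) := by field_simp; ring
    have : (0:ℝ) ≤ (ρ - ρ₀) ^ 2 / (2 * ν) := by positivity
    linarith
  · -- 0 < ρ₀ ≤ ν < ρ
    have hid : ρ - (ρ₀ ^ 2 / (2 * ν) + ν / 2 + ρ₀ / ν * (ρ - ρ₀))
        = (ν - ρ₀) * (2 * ρ - ν - ρ₀) / (2 * ν) := by field_simp; ring
    have hnum : 0 ≤ (ν - ρ₀) * (2 * ρ - ν - ρ₀) := by nlinarith
    have := div_nonneg hnum (by positivity : (0:ℝ) ≤ 2 * ν)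
    linarith
  · linarith
  · -- ρ₀ > ν, ρ middle
    have hid : ρ ^ 2 / (2 * ν) + ν / 2 - ρ = (ρ - ν) ^ 2 / (2 * ν) := by field_simp; ring
    have : (0:ℝ) ≤ (ρ - ν) ^ 2 / (2 * ν) := by positivity
    linarith
  · linarith

theorem smoothed_quantile_explicit_minimizer
    (N : ℕ) (hN : 1 ≤ N) (α : Fin N → ℝ) (hα : ∀ k, 0 < α k)
    (hαsum : ∑ k, α k = 1) (θ : ℝ) (hθ0 : 0 < θ) (hθ1 : θ < 1)
    (x : Fin N → ℝ) (hx : StrictMono x) (ν : ℝ) (hν : 0 < ν)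
    (hgap : ∀ (k : ℕ) (hk : k + 1 < N),
      ν < x ⟨k + 1, hk⟩ - x ⟨k, Nat.lt_of_succ_lt hk⟩)
    (jstar : Fin N)
    (hjstar : IsLeast {j : Fin N | 1 - θ ≤ ∑ k ∈ Finset.Iic j, α k} jstar) :
    ∀ η : ℝ,
      (x jstar - (ν / α jstar) * ((∑ k ∈ Finset.Iic jstar, α k) - (1 - θ)))
          + (1 / θ) * ∑ k, α k * gsm ν (x k -
            (x jstar - (ν / α jstar) * ((∑ k ∈ Finset.Iic jstar, α k) - (1 - θ))))
        ≤ η + (1 / θ) * ∑ k, α k * gsm ν (x k - η) := by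
  intro η
  set S : ℝ := ∑ k ∈ Finset.Iic jstar, α k with hS
  set s : ℝ := S - (1 - θ) with hs
  set η0 : ℝ := x jstar - (ν / α jstar) * s with hη0
  set t : ℝ := (ν / α jstar) * s with ht
  -- gaps between distinct points exceed ν
  have hgap' : ∀ i j : Fin N, i < j → ν < x j - x i := by
    intro i j hij
    have h1 : (i : ℕ) + 1 ≤ (j : ℕ) := hij
    have h2 : (i : ℕ) + 1 < N := lt_of_le_of_lt h1 j.isLt
    have h3 : ν < x ⟨(i : ℕ) + 1, h2⟩ - x ⟨(i : ℕ), Nat.lt_of_succ_lt h2⟩ := hgap i h2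
    have h4 : x ⟨(i : ℕ) + 1, h2⟩ ≤ x j := hx.monotone (by exact h1)
    have h5 : x ⟨(i : ℕ), Nat.lt_of_succ_lt h2⟩ = x i := by congr
    linarith [h3, h4, h5.le, h5.ge]
  have hαj : 0 < α jstar := hα jstar
  -- 0 ≤ s
  have hs0 : 0 ≤ s := by
    have := hjstar.1
    simp only [Set.mem_setOf_eq] at this
    simp [hs, hS]; linarith
  -- s < α jstar
  have hslt : s < α jstar := by
    rcases Nat.eq_zero_or_pos (jstar : ℕ) with h0 | hlt
    · have heq : Finset.Iic jstar = {jstar} := by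
        ext k
        simp only [Finset.mem_Iic, Finset.mem_singleton]
        constructor
        · intro hk
          have h1 := Fin.le_def.1 hk
          exact Fin.ext (by omega)
        · rintro rfl; exact le_refl _
      have : S = α jstar := by rw [hS, heq, Finset.sum_singleton]
      rw [hs, this]; linarith
    · 
      set j' : Fin N := ⟨(jstar : ℕ) - 1, lt_trans (Nat.sub_lt hlt one_pos) jstar.isLt⟩ with hj'
      have hj'lt : j' < jstar := by
        simp only [Fin.lt_def, hj']
        exact Nat.sub_lt hlt one_pos
      have hnot : ¬ (1 - θ ≤ ∑ k ∈ Finset.Iic j', α k) := by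
        intro hmem
        exact absurd (hjstar.2 hmem) (not_le.2 hj'lt)
      push_neg at hnot
      have hsplit : Finset.Iic jstar = insert jstar (Finset.Iic j') := by
        ext k
        simp only [Finset.mem_Iic, Finset.mem_insert]
        constructor
        · intro hk
          rcases eq_or_lt_of_le hk with h | h
          · exact Or.inl h
          · right
            have : (k : ℕ) < (jstar : ℕ) := h
            exact Nat.le_sub_one_of_lt this
        · rintro (rfl | hk)
          · exact le_refl _
          · exact le_of_lt (lt_of_le_of_lt hk hj'lt)
      have hnotmem : jstar ∉ Finset.Iic j' := by
        simp only [Finset.mem_Iic]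
        exact not_le.2 hj'lt
      have : S = α jstar + ∑ k ∈ Finset.Iic j', α k := by
        rw [hS, hsplit, Finset.sum_insert hnotmem]
      rw [hs, this]; linarith
  -- t bounds
  have ht0 : 0 ≤ t := mul_nonneg (div_nonneg hν.le hαj.le) hs0
  have htν : t < ν := by
    rw [ht]
    calc ν / α jstar * s < ν / α jstar * α jstar := by
          apply mul_lt_mul_of_pos_left hslt (div_pos hν hαj)
      _ = ν := div_mul_cancel₀ ν hαj.ne'
  -- the key sum of subgradients
  have hsum : ∑ k, α k * dsm ν (x k - η0) = θ := by
    have huniv : (Finset.univ : Finset (Fin N)) = Finset.Iic jstar ∪ Finset.Ioi jstar := by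
      ext k; simp [le_or_gt]
    have hdisj : Disjoint (Finset.Iic jstar) (Finset.Ioi jstar) := by
      simp [Finset.disjoint_left]
    have hsplit2 : Finset.Iic jstar = insert jstar (Finset.Iio jstar) := by
      ext k
      simp only [Finset.mem_Iic, Finset.mem_insert, Finset.mem_Iio]
      constructor
      · intro hk; exact hk.eq_or_lt.imp id id
      · rintro (rfl | hk); exacts [le_refl _, hk.le]
    have hnotmem : jstar ∉ Finset.Iio jstar := by simp
    -- Iio terms vanish
    have hIio : ∑ k ∈ Finset.Iio jstar, α k * dsm ν (x k - η0) = 0 := by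
      apply Finset.sum_eq_zero
      intro k hk
      have hk' : k < jstar := Finset.mem_Iio.1 hk
      have : x k - η0 ≤ 0 := by
        have := hgap' k jstar hk'
        rw [hη0]; linarith
      rw [dsm, if_pos this, mul_zero]
    -- center term
    have hcenter : α jstar * dsm ν (x jstar - η0) = s := by
      have hxη : x jstar - η0 = t := by rw [hη0]; ring
      rw [hxη]
      have hd : dsm ν t = t / ν := by
        unfold dsm
        rcases eq_or_lt_of_le ht0 with h | h
        · rw [if_pos h.ge, ← h, zero_div]
        · rw [if_neg (not_le.2 h), if_pos htν.le]
      rw [hd, ht]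
      field_simp
    -- Ioi terms are α k
    have hIoi : ∑ k ∈ Finset.Ioi jstar, α k * dsm ν (x k - η0)
        = ∑ k ∈ Finset.Ioi jstar, α k := by
      apply Finset.sum_congr rfl
      intro k hk
      have hk' : jstar < k := Finset.mem_Ioi.1 hk
      have h1 : ν < x k - η0 := by
        have := hgap' jstar k hk'
        rw [hη0]; linarith
      rw [dsm, if_neg (by linarith), if_neg (not_le.2 h1), mul_one]
    have hIoiS : ∑ k ∈ Finset.Ioi jstar, α k = 1 - S := by
      have : S + ∑ k ∈ Finset.Ioi jstar, α k = 1 := by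
        rw [hS, ← Finset.sum_union hdisj, ← huniv, hαsum]
      linarith
    calc ∑ k, α k * dsm ν (x k - η0)
        = ∑ k ∈ Finset.Iic jstar, α k * dsm ν (x k - η0)
          + ∑ k ∈ Finset.Ioi jstar, α k * dsm ν (x k - η0) := by
          rw [← Finset.sum_union hdisj, ← huniv]
      _ = (α jstar * dsm ν (x jstar - η0) + ∑ k ∈ Finset.Iio jstar, α k * dsm ν (x k - η0))
          + ∑ k ∈ Finset.Ioi jstar, α k := by
          rw [hsplit2, Finset.sum_insert hnotmem, hIoi]
      _ = s + (1 - S) := by rw [hcenter, hIio, hIoiS]; ring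
      _ = θ := by rw [hs]; ring
  -- subgradient inequality summed
  have hterm : ∀ k : Fin N, α k * gsm ν (x k - η0) + α k * dsm ν (x k - η0) * (η0 - η)
      ≤ α k * gsm ν (x k - η) := by
    intro k
    have := gsm_subgrad ν hν (x k - η0) (x k - η)
    have h2 : (x k - η) - (x k - η0) = η0 - η := by ring
    rw [h2] at this
    nlinarith [mul_le_mul_of_nonneg_left this (hα k).le]
  have hsum2 : ∑ k, α k * gsm ν (x k - η0) + θ * (η0 - η) ≤ ∑ k, α k * gsm ν (x k - η) := by
    calc ∑ k, α k * gsm ν (x k - η0) + θ * (η0 - η)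
        = ∑ k, (α k * gsm ν (x k - η0) + α k * dsm ν (x k - η0) * (η0 - η)) := by
          rw [Finset.sum_add_distrib, ← Finset.sum_mul, hsum]
      _ ≤ ∑ k, α k * gsm ν (x k - η) := Finset.sum_le_sum fun k _ => hterm k
  have hθ' : (0 : ℝ) < 1 / θ := by positivity
  have := mul_le_mul_of_nonneg_left hsum2 hθ'.le
  have hfin : (1/θ) * (θ * (η0 - η)) = η0 - η := by field_simp
  calc η0 + (1/θ) * ∑ k, α k * gsm ν (x k - η0)
      = η + ((1/θ) * (∑ k, α k * gsm ν (x k - η0) + θ * (η0 - η))) := by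
        rw [mul_add, hfin]; ring
    _ ≤ η + (1/θ) * ∑ k, α k * gsm ν (x k - η) := by linarith [this]
end

section
/- Fix an integer N ≥ 1, weights α_1,…,α_N > 0 with Σ_{k=1}^N α_k = 1, θ ∈ (0,1), and ν > 0. Let each F_k : ℝ^d → ℝ be continuous. Then F̄_{θ,ν} is level-bounded in η locally uniformly in w: for every ŵ ∈ ℝ^d and every λ ∈ ℝ, there exists ρ > 0 such that the set { (w,η) ∈ ℝ^d × ℝ : ‖w − ŵ‖ ≤ ρ and F̄_{θ,ν}(w,η) ≤ λ } is bounded. -/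
open Finset

lemma gsm_ge_half (ν ρ : ℝ) (hν : 0 < ν) : ν / 2 ≤ gsm ν ρ := by
  unfold gsm
  split_ifs with h1 h2
  · exact le_refl _
  · have h : (0:ℝ) ≤ ρ ^ 2 / (2 * ν) := by positivity
    linarith
  · nlinarith

lemma gsm_ge_self (ν ρ : ℝ) (hν : 0 < ν) : ρ ≤ gsm ν ρ := by
  unfold gsm
  split_ifs with h1 h2
  · linarith
  · rw [div_add' _ _ _ (by positivity), le_div_iff₀ (by positivity)]; nlinarith [sq_nonneg (ρ - ν)]
  · exact le_refl _

theorem smoothed_objective_level_bounded_locally_uniformly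
    (N d : ℕ) (hN : 1 ≤ N) (α : Fin N → ℝ) (hα : ∀ k, 0 < α k)
    (hαsum : ∑ k, α k = 1) (θ ν : ℝ) (hθ0 : 0 < θ) (hθ1 : θ < 1) (hν : 0 < ν)
    (F : Fin N → EuclideanSpace ℝ (Fin d) → ℝ)
    (hF : ∀ k, Continuous (F k)) :
    ∀ (what : EuclideanSpace ℝ (Fin d)) (lam : ℝ), ∃ ρ > (0 : ℝ),
      Bornology.IsBounded {p : EuclideanSpace ℝ (Fin d) × ℝ |
        ‖p.1 - what‖ ≤ ρ ∧
        p.2 + (1 / θ) * ∑ k, α k * gsm ν (F k p.1 - p.2) ≤ lam} := by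
  intro what lam
  refine ⟨1, one_pos, ?_⟩
  -- G = weighted sum of F k, continuous, bounded on closed ball
  set G : EuclideanSpace ℝ (Fin d) → ℝ := fun w => ∑ k, α k * F k w with hG
  have hGc : Continuous G := by
    apply continuous_finset_sum
    intro k _
    exact continuous_const.mul (hF k)
  obtain ⟨M, hM⟩ := (isCompact_closedBall what 1).exists_bound_of_continuousOn
    hGc.continuousOn
  set t : ℝ := 1 / θ with ht
  have ht1 : 1 < t := by rw [ht, lt_div_iff₀ hθ0]; linarith
  set a : ℝ := (lam + t * M) / (1 - t) with ha
  apply Bornology.IsBounded.subset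
    ((Metric.isBounded_closedBall (x := what) (r := 1)).prod
      (Metric.isBounded_Icc a lam))
  rintro ⟨w, η⟩ ⟨hw, hlev⟩
  have hwball : w ∈ Metric.closedBall what 1 := by
    rwa [Metric.mem_closedBall, dist_eq_norm]
  constructor
  · exact hwball
  · simp only [Set.mem_Icc]
    have ht0 : 0 < t := lt_trans one_pos ht1
    -- upper bound: sum ≥ ν/2
    have hsum1 : ν / 2 ≤ ∑ k, α k * gsm ν (F k w - η) := by
      calc ν / 2 = ∑ k, α k * (ν / 2) := by rw [← Finset.sum_mul, hαsum, one_mul]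
        _ ≤ _ := Finset.sum_le_sum fun k _ =>
            mul_le_mul_of_nonneg_left (gsm_ge_half ν _ hν) (hα k).le
    have hub : η ≤ lam := by
      nlinarith [hsum1, hlev]
    -- lower bound: sum ≥ G w - η
    have hsum2 : G w - η ≤ ∑ k, α k * gsm ν (F k w - η) := by
      have : G w - η = ∑ k, α k * (F k w - η) := by
        simp [hG, Finset.sum_sub_distrib, mul_sub, ← Finset.sum_mul, hαsum]
      rw [this]
      exact Finset.sum_le_sum fun k _ =>
        mul_le_mul_of_nonneg_left (gsm_ge_self ν _ hν) (hα k).le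
    have hGM : |G w| ≤ M := hM w hwball
    have hGlb : -M ≤ G w := neg_le_of_abs_le hGM
    have hlb : a ≤ η := by
      have h1 : η + t * (G w - η) ≤ lam := by
        calc η + t * (G w - η) ≤ η + t * ∑ k, α k * gsm ν (F k w - η) :=
              by nlinarith [hsum2]
          _ ≤ lam := hlev
      have h2 : (1 - t) * η ≤ lam + t * M := by nlinarith
      rw [ha, div_le_iff_of_neg (by linarith : 1 - t < 0)]
      linarith [h2]
    exact ⟨hlb, hub⟩
end
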